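/- arXiv:1206.1714 — 3 statements merged into one kernel-verified Lean document; each statement's English description precedes it below -/
import Mathlib

section
/- Let S be a semigroup. If there exists one finite generating set A for S such that SWP(S,A) is rational, then for every finite generating set B of S, the relation SWP(S,B) is rational. -/
/-- An asynchronous two-tape finite state automaton: in each step it reads at
most one symbol from each tape. -/
structure AsyncFSA (A : Type*) (B : Type*) where
  Q : Type
  [fin : Finite Q]
  init : Q
  accept : Set Q
  trans : Q → Option A → Option B → Q → Prop

namespace AsyncFSA

variable {A B : Type*}

/-- Computations of an asynchronous automaton. -/
inductive Reaches (M : AsyncFSA A B) : M.Q → List A → List B → M.Q → Prop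
  | refl (q : M.Q) : Reaches M q [] [] q
  | step {p q r : M.Q} {a : Option A} {b : Option B} {u : List A} {v : List B} :
      M.trans p a b q → Reaches M q u v r →
      Reaches M p (a.toList ++ u) (b.toList ++ v) r

/-- Acceptance of a pair of strings. -/
def Accepts (M : AsyncFSA A B) (u : List A) (v : List B) : Prop :=
  ∃ q ∈ M.accept, M.Reaches M.init u v q

end AsyncFSA

/-- A relation on strings is rational if it is decided by an asynchronous
two-tape finite state automaton. -/
def IsRationalRel {A B : Type*} (R : Set (List A × List B)) : Prop :=
  ∃ M : AsyncFSA A B, ∀ p : List A × List B, p ∈ R ↔ M.Accepts p.1 p.2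

/-- Pad a pair of strings to equal length, using `none` as padding symbol. -/
def padPair {A : Type*} (p : List A × List A) : List (Option A × Option A) :=
  List.zip (p.1.map some ++ List.replicate (p.2.length - p.1.length) none)
           (p.2.map some ++ List.replicate (p.1.length - p.2.length) none)

/-- A relation on strings is regular if a synchronous two-tape finite state
automaton (a finite automaton over the padded pair alphabet) accepts a padded
pair exactly when the pair is in the relation. -/
def IsRegularRel {A : Type*} (R : Set (List A × List A)) : Prop :=
  ∃ (Q : Type) (_ : Fintype Q) (M : DFA (Option A × Option A) Q),
    ∀ p : List A × List A, p ∈ R ↔ padPair p ∈ M.accepts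

/-- A language is regular if accepted by a finite state automaton. -/
def IsRegularLang {A : Type*} (L : Set (List A)) : Prop :=
  ∃ (Q : Type) (_ : Fintype Q) (M : DFA A Q), ∀ w, w ∈ L ↔ w ∈ M.accepts

/-- Evaluation of a word in a semigroup (`none` for the empty word). -/
def evalWord {α : Type*} {S : Type*} [Semigroup S] (f : α → S) : List α → Option S
  | [] => none
  | a :: l => some (List.foldl (fun s x => s * f x) (f a) l)

/-- The semigroup word problem with respect to a set `A` of elements:
pairs of nonempty strings over `A` representing the same element. -/
def SWP {S : Type*} [Semigroup S] (A : Set S) : Set (List ↥A × List ↥A) :=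
  {p | p.1 ≠ [] ∧ p.2 ≠ [] ∧
    evalWord Subtype.val p.1 = evalWord Subtype.val p.2}

/-- The monoid word problem with respect to a set `A` of elements. -/
def MWP {M : Type*} [Monoid M] (A : Set M) : Set (List ↥A × List ↥A) :=
  {p | (p.1.map Subtype.val).prod = (p.2.map Subtype.val).prod}

/-- A semigroup has rational word problem if it has a finite generating set
with rational word problem. -/
def HasRationalWP (S : Type*) [Semigroup S] : Prop :=
  ∃ A : Set S, A.Finite ∧ Subsemigroup.closure A = ⊤ ∧ IsRationalRel (SWP A)

/-!
Pick for every `b ∈ B` a nonempty word `w b` over `A` representing `b` (possible since `A`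
generates). Then `SWP B` is the preimage of `SWP A` under the substitution `w` applied to both
tapes. Rational relations are stable under such preimages: an automaton reading `(u, v)` feeds
`(u.flatMap w, v.flatMap w)` to an automaton for `SWP A` through two buffers whose length is
bounded by the longest `w b`, so only finitely many states are needed.
-/

theorem List.flatMap_eq_nil_iff_of_forall_ne_nil {α β : Type*} {w : β → List α}
    (hw : ∀ b, w b ≠ []) {u : List β} : u.flatMap w = [] ↔ u = [] := by
  simp only [List.flatMap_eq_nil_iff, hw, imp_false, ← List.eq_nil_iff_forall_not_mem]

section EvalWord

variable {α β S : Type*} [Semigroup S]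

theorem evalWord_append (f : α → S) (l₁ l₂ : List α) :
    evalWord f (l₁ ++ l₂) = Option.merge (· * ·) (evalWord f l₁) (evalWord f l₂) := by
  match l₁, l₂ with
  | [], _ => exact Option.merge_none_left.symm
  | _ :: _, [] => simp [evalWord]
  | a :: l₁, b :: l₂ =>
    simp only [evalWord, List.cons_append, List.foldl_append, List.foldl_cons, Option.merge]
    simp only [← List.foldl_map (f := f) (g := (· * ·)), List.foldl_assoc]

theorem ne_nil_of_evalWord_eq_some {f : α → S} {l : List α} {s : S}
    (h : evalWord f l = some s) : l ≠ [] := by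
  rintro rfl
  cases h

theorem evalWord_flatMap {g : α → S} {f : β → S} {w : β → List α}
    (hw : ∀ b, evalWord g (w b) = some (f b)) (u : List β) :
    evalWord g (u.flatMap w) = evalWord f u := by
  induction u with
  | nil => rfl
  | cons b u ih =>
    rw [List.flatMap_cons, evalWord_append, hw, ih, ← List.singleton_append, evalWord_append]
    rfl

theorem exists_evalWord_eq_of_mem_closure {A : Set S} {s : S}
    (hs : s ∈ Subsemigroup.closure A) : ∃ l : List A, evalWord Subtype.val l = some s := by
  induction hs using Subsemigroup.closure_induction with
  | mem x hx => exact ⟨[⟨x, hx⟩], rfl⟩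
  | mul x y _ _ ihx ihy =>
    obtain ⟨l₁, h₁⟩ := ihx
    obtain ⟨l₂, h₂⟩ := ihy
    exact ⟨l₁ ++ l₂, by rw [evalWord_append, h₁, h₂]; rfl⟩

theorem SWP_eq_preimage_flatMap {A B : Set S} {w : B → List A}
    (hw : ∀ b, evalWord Subtype.val (w b) = some b.val) :
    SWP B = (fun p => (p.1.flatMap w, p.2.flatMap w)) ⁻¹' SWP A := by
  have hne : ∀ b, w b ≠ [] := fun b => ne_nil_of_evalWord_eq_some (hw b)
  ext ⟨u, v⟩
  simp only [SWP, Set.mem_preimage, Set.mem_ofPred_eq, evalWord_flatMap hw, ne_eq,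
    List.flatMap_eq_nil_iff_of_forall_ne_nil hne]

end EvalWord

/-- When `M` consumes `a` from the stream `s ++ u.flatMap w`, the buffer `s` has to be refilled
with the image of one letter of `u` only when it is empty, so it never grows beyond `N`. -/
theorem exists_buffer_refill {α β : Type*} {w : β → List α} {N : ℕ} (hw : ∀ b, w b ≠ [])
    (hN : ∀ b, (w b).length ≤ N) {a : Option α} {s x : List α} {u : List β}
    (hs : s.length ≤ N) (h : a.toList ++ x = s ++ u.flatMap w) :
    ∃ (b : Option β) (u' : List β) (s' : List α), u = b.toList ++ u' ∧
      s ++ b.toList.flatMap w = a.toList ++ s' ∧ x = s' ++ u'.flatMap w ∧ s'.length ≤ N := by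
  match a, s, u with
  | none, s, u => exact ⟨none, u, s, rfl, by simp, h, hs⟩
  | some c, c' :: s, u =>
    obtain ⟨rfl, rfl⟩ := List.cons_eq_cons.mp h
    exact ⟨none, u, s, rfl, by simp, rfl, (Nat.le_succ _).trans hs⟩
  | some c, [], [] => simp at h
  | some c, [], b :: u =>
    obtain ⟨c', r, hb⟩ := List.exists_cons_of_ne_nil (hw b)
    rw [List.nil_append, List.flatMap_cons, hb, List.cons_append] at h
    obtain ⟨rfl, rfl⟩ := List.cons_eq_cons.mp h
    refine ⟨some b, u, r, rfl, by simp [hb], rfl, ?_⟩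
    have := hN b
    rw [hb, List.length_cons] at this
    omega

namespace AsyncFSA

variable {α β γ δ : Type*} (M : AsyncFSA α γ) (w₁ : β → List α) (w₂ : δ → List γ) (N : ℕ)

/-- The two buffers hold the letters of the substituted input words that have been read but
not yet consumed by `M`. -/
abbrev BufferedState : Type _ :=
  M.Q × {s : List α // s.length ≤ N} × {t : List γ // t.length ≤ N}

def BufferedStep (p : M.BufferedState N) (b : Option β) (d : Option δ)
    (p' : M.BufferedState N) : Prop :=
  ∃ a c, M.trans p.1 a c p'.1 ∧
    p.2.1.1 ++ b.toList.flatMap w₁ = a.toList ++ p'.2.1.1 ∧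
    p.2.2.1 ++ d.toList.flatMap w₂ = c.toList ++ p'.2.2.1

variable [Finite α] [Finite γ]

instance : Finite (M.BufferedState N) :=
  have := M.fin
  have : Finite {s : List α // s.length ≤ N} := (List.finite_length_le α N).to_subtype
  have : Finite {t : List γ // t.length ≤ N} := (List.finite_length_le γ N).to_subtype
  inferInstance

noncomputable def stateEquiv : M.BufferedState N ≃ Fin (Nat.card (M.BufferedState N)) :=
  Finite.equivFin _

/-- States are coded in `Fin _`, since an `AsyncFSA` needs its state space in `Type`. -/
noncomputable def comap : AsyncFSA β δ where
  Q := Fin (Nat.card (M.BufferedState N))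
  init := M.stateEquiv N (M.init, ⟨[], Nat.zero_le N⟩, ⟨[], Nat.zero_le N⟩)
  accept := M.stateEquiv N '' {p | p.1 ∈ M.accept ∧ p.2.1.1 = [] ∧ p.2.2.1 = []}
  trans q b d q' :=
    M.BufferedStep w₁ w₂ N ((M.stateEquiv N).symm q) b d ((M.stateEquiv N).symm q')

theorem reaches_of_comap_reaches {q r : (M.comap w₁ w₂ N).Q} {u : List β} {v : List δ}
    (h : (M.comap w₁ w₂ N).Reaches q u v r)
    (hr₁ : ((M.stateEquiv N).symm r).2.1.1 = []) (hr₂ : ((M.stateEquiv N).symm r).2.2.1 = []) :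
    M.Reaches ((M.stateEquiv N).symm q).1
      (((M.stateEquiv N).symm q).2.1.1 ++ u.flatMap w₁)
      (((M.stateEquiv N).symm q).2.2.1 ++ v.flatMap w₂) ((M.stateEquiv N).symm r).1 := by
  induction h with
  | refl q => simpa [hr₁, hr₂] using Reaches.refl _
  | step hstep _ ih =>
    obtain ⟨a, c, htrans, h₁, h₂⟩ := hstep
    simp only [List.flatMap_append, ← List.append_assoc, h₁, h₂]
    simpa only [List.append_assoc] using Reaches.step htrans (ih hr₁ hr₂)

theorem comap_reaches_of_reaches (hw₁ : ∀ b, w₁ b ≠ []) (hw₂ : ∀ d, w₂ d ≠ [])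
    (hN₁ : ∀ b, (w₁ b).length ≤ N) (hN₂ : ∀ d, (w₂ d).length ≤ N)
    {q r : M.Q} {x : List α} {y : List γ} (h : M.Reaches q x y r)
    (s : List α) (hs : s.length ≤ N) (t : List γ) (ht : t.length ≤ N) (u : List β) (v : List δ)
    (hx : x = s ++ u.flatMap w₁) (hy : y = t ++ v.flatMap w₂) :
    (M.comap w₁ w₂ N).Reaches (M.stateEquiv N (q, ⟨s, hs⟩, ⟨t, ht⟩)) u v
      (M.stateEquiv N (r, ⟨[], Nat.zero_le N⟩, ⟨[], Nat.zero_le N⟩)) := by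
  induction h generalizing s t u v with
  | refl q =>
    obtain ⟨rfl, hu⟩ := List.append_eq_nil_iff.mp hx.symm
    obtain ⟨rfl, hv⟩ := List.append_eq_nil_iff.mp hy.symm
    rw [(List.flatMap_eq_nil_iff_of_forall_ne_nil hw₁).mp hu,
      (List.flatMap_eq_nil_iff_of_forall_ne_nil hw₂).mp hv]
    exact Reaches.refl _
  | step htrans _ ih =>
    obtain ⟨b, u', s', rfl, hs₁, hx', hs'⟩ := exists_buffer_refill hw₁ hN₁ hs hx
    obtain ⟨d, v', t', rfl, ht₁, hy', ht'⟩ := exists_buffer_refill hw₂ hN₂ ht hy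
    refine Reaches.step ?_ (ih s' hs' t' ht' u' v' hx' hy')
    simpa [comap] using ⟨_, _, htrans, hs₁, ht₁⟩

theorem comap_accepts_iff (hw₁ : ∀ b, w₁ b ≠ []) (hw₂ : ∀ d, w₂ d ≠ [])
    (hN₁ : ∀ b, (w₁ b).length ≤ N) (hN₂ : ∀ d, (w₂ d).length ≤ N) (u : List β) (v : List δ) :
    (M.comap w₁ w₂ N).Accepts u v ↔ M.Accepts (u.flatMap w₁) (v.flatMap w₂) := by
  constructor
  · rintro ⟨_, ⟨r, ⟨hr, hr₁, hr₂⟩, rfl⟩, h⟩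
    refine ⟨r.1, hr, ?_⟩
    simpa [comap] using
      reaches_of_comap_reaches M w₁ w₂ N h (by simpa using hr₁) (by simpa using hr₂)
  · rintro ⟨r, hr, h⟩
    exact ⟨_, ⟨_, ⟨hr, rfl, rfl⟩, rfl⟩,
      comap_reaches_of_reaches M w₁ w₂ N hw₁ hw₂ hN₁ hN₂ h [] _ [] _ u v rfl rfl⟩

end AsyncFSA

theorem IsRationalRel.preimage_flatMap {α β γ δ : Type*} [Finite α] [Finite β] [Finite γ]
    [Finite δ] {R : Set (List α × List γ)} (hR : IsRationalRel R) {w₁ : β → List α}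
    {w₂ : δ → List γ} (hw₁ : ∀ b, w₁ b ≠ []) (hw₂ : ∀ d, w₂ d ≠ []) :
    IsRationalRel ((fun p => (p.1.flatMap w₁, p.2.flatMap w₂)) ⁻¹' R) := by
  obtain ⟨M, hM⟩ := hR
  obtain ⟨N₁, hN₁⟩ := Finite.exists_le fun b => (w₁ b).length
  obtain ⟨N₂, hN₂⟩ := Finite.exists_le fun d => (w₂ d).length
  refine ⟨M.comap w₁ w₂ (max N₁ N₂), fun p => ?_⟩
  rw [AsyncFSA.comap_accepts_iff M w₁ w₂ _ hw₁ hw₂ (fun b => (hN₁ b).trans (le_max_left _ _))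
    (fun d => (hN₂ d).trans (le_max_right _ _))]
  exact hM _

/-- Rationality of the word problem is independent of the choice of finite
generating set. -/
theorem stmt_8 {S : Type*} [Semigroup S]
    (h : ∃ A : Set S, A.Finite ∧ Subsemigroup.closure A = ⊤ ∧
      IsRationalRel (SWP A)) :
    ∀ B : Set S, B.Finite → Subsemigroup.closure B = ⊤ →
      IsRationalRel (SWP B) := by
  obtain ⟨A, hAfin, hAgen, hA⟩ := h
  intro B hBfin _
  have := hAfin.to_subtype
  have := hBfin.to_subtype
  choose w hw using fun b : B =>
    exists_evalWord_eq_of_mem_closure (hAgen ▸ Subsemigroup.mem_top b.val)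
  have hne : ∀ b, w b ≠ [] := fun b => ne_nil_of_evalWord_eq_some (hw b)
  rw [SWP_eq_preimage_flatMap hw]
  exact hA.preimage_flatMap hne hne
end

section
/- Let G be a group finitely generated by A as a monoid. Then the monoid word problem MWP(G,A) = {(v,w) ∈ A* × A* : v̄ = w̄} is a rational relation if and only if G is finite. -/
namespace AsyncFSA

variable {A B : Type*} {M : AsyncFSA A B}

theorem Reaches.append {p q r : M.Q} {u u' : List A} {v v' : List B}
    (h₁ : M.Reaches p u v q) (h₂ : M.Reaches q u' v' r) :
    M.Reaches p (u ++ u') (v ++ v') r := by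
  induction h₁ with
  | refl => exact h₂
  | step ht _ ih =>
    rw [List.append_assoc, List.append_assoc]
    exact .step ht (ih h₂)

theorem Reaches.exists_split_of_right_nil {p r : M.Q} {x y : List A}
    (h : M.Reaches p (x ++ y) [] r) :
    ∃ q, M.Reaches p x [] q ∧ M.Reaches q y [] r := by
  generalize hu : x ++ y = u at h
  generalize hv : ([] : List B) = v at h
  induction h generalizing x with
  | refl q =>
    obtain ⟨rfl, rfl⟩ := List.append_eq_nil_iff.mp hu
    exact ⟨q, .refl q, .refl q⟩
  | @step p q r a b u' v' ht hr ih =>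
    obtain ⟨hb, rfl⟩ := List.append_eq_nil_iff.mp hv.symm
    obtain rfl : b = none := by simpa using hb
    rcases x with _ | ⟨c, x⟩
    · subst hu
      exact ⟨p, .refl p, .step (b := none) ht hr⟩
    rcases a with _ | a
    · obtain ⟨q', h₁, h₂⟩ := ih hu rfl
      exact ⟨q', .step (a := none) (b := none) ht h₁, h₂⟩
    · obtain ⟨rfl, hu'⟩ : a = c ∧ x ++ y = u' := by simpa [eq_comm] using hu
      obtain ⟨q', h₁, h₂⟩ := ih hu' rfl
      exact ⟨q', .step (a := some a) (b := none) ht h₁, h₂⟩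

theorem Reaches.val_eq_of_forall_trans {G : Type*} [Group G] {M : AsyncFSA A A} {f : A → G}
    {val : M.Q → G}
    (hval : ∀ p a b q, M.trans p a b q → val q = (a.elim 1 f)⁻¹ * val p * b.elim 1 f)
    {p q : M.Q} {u v : List A} (h : M.Reaches p u v q) :
    val q = (u.map f).prod⁻¹ * val p * (v.map f).prod := by
  induction h with
  | refl => simp
  | @step p q r a b u v ht _ ih =>
    rw [ih, hval _ _ _ _ ht]
    cases a <;> cases b <;> simp [mul_assoc]

end AsyncFSA

section CayleyAutomaton

variable {α G : Type*} [Group G] {Q : Type} [Finite Q]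

-- An `abbrev`, so that `simp` sees the states `(cayleyFSA f e).Q` as elements of `Q`.
abbrev cayleyFSA (f : α → G) (e : Q ≃ G) : AsyncFSA α α where
  Q := Q
  init := e.symm 1
  accept := {e.symm 1}
  trans p a b q := e q = (a.elim 1 f)⁻¹ * e p * b.elim 1 f

variable (f : α → G) (e : Q ≃ G)

theorem cayleyFSA_reaches_left (u : List α) (p : Q) :
    (cayleyFSA f e).Reaches p u [] (e.symm ((u.map f).prod⁻¹ * e p)) := by
  induction u generalizing p with
  | nil => simpa using AsyncFSA.Reaches.refl (M := cayleyFSA f e) p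
  | cons a u ih =>
    have ht : (cayleyFSA f e).trans p (some a) none (e.symm ((f a)⁻¹ * e p)) := by
      simp
    simpa [mul_assoc] using AsyncFSA.Reaches.step ht (ih _)

theorem cayleyFSA_reaches_right (v : List α) (p : Q) :
    (cayleyFSA f e).Reaches p [] v (e.symm (e p * (v.map f).prod)) := by
  induction v generalizing p with
  | nil => simpa using AsyncFSA.Reaches.refl (M := cayleyFSA f e) p
  | cons b v ih =>
    have ht : (cayleyFSA f e).trans p none (some b) (e.symm (e p * f b)) := by
      simp
    simpa [mul_assoc] using AsyncFSA.Reaches.step ht (ih _)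

theorem cayleyFSA_reaches_iff {u v : List α} {p q : Q} :
    (cayleyFSA f e).Reaches p u v q ↔ e q = (u.map f).prod⁻¹ * e p * (v.map f).prod := by
  refine ⟨fun h => h.val_eq_of_forall_trans fun _ _ _ _ ht => ht, fun h => ?_⟩
  have hq : q = e.symm (e (e.symm ((u.map f).prod⁻¹ * e p)) * (v.map f).prod) := by
    rw [Equiv.apply_symm_apply, ← h, Equiv.symm_apply_apply]
  simpa [hq] using (cayleyFSA_reaches_left f e u p).append (cayleyFSA_reaches_right f e v _)

theorem cayleyFSA_accepts_iff {u v : List α} :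
    (cayleyFSA f e).Accepts u v ↔ (u.map f).prod = (v.map f).prod := by
  unfold AsyncFSA.Accepts
  simp [cayleyFSA_reaches_iff, inv_mul_eq_one, eq_comm]

end CayleyAutomaton

section

variable {α G : Type*} [Group G]

theorem isRationalRel_prod_eq_of_finite [Finite G] (f : α → G) :
    IsRationalRel {p : List α × List α | (p.1.map f).prod = (p.2.map f).prod} := by
  obtain ⟨n, ⟨e⟩⟩ := Finite.exists_equiv_fin G
  exact ⟨cayleyFSA f e.symm, fun p => (cayleyFSA_accepts_iff f e.symm).symm⟩

theorem AsyncFSA.prod_eq_of_reaches {M : AsyncFSA α α} {f : α → G}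
    (hM : ∀ u v, M.Accepts u v ↔ (u.map f).prod = (v.map f).prod)
    {u₁ u₂ w : List α} {q r : M.Q} (hr : r ∈ M.accept) (hw : M.Reaches q w [] r)
    (h₁ : M.Reaches M.init u₁ [] q) (h₂ : M.Reaches M.init u₂ [] q) :
    (u₁.map f).prod = (u₂.map f).prod := by
  have hacc : ∀ u, M.Reaches M.init u [] q → (u.map f).prod * (w.map f).prod = 1 :=
    fun u hu => by simpa using (hM (u ++ w) []).mp ⟨r, hr, by simpa using hu.append hw⟩
  exact mul_right_cancel ((hacc u₁ h₁).trans (hacc u₂ h₂).symm)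

theorem finite_of_isRationalRel_prod_eq {f : α → G}
    (hf : ∀ g, ∃ l : List α, (l.map f).prod = g)
    (h : IsRationalRel {p : List α × List α | (p.1.map f).prod = (p.2.map f).prod}) :
    Finite G := by
  classical
  obtain ⟨M, hM⟩ := h
  have := M.fin
  choose word hword using hf
  refine Finite.of_surjective
    (fun q => if h : ∃ u, M.Reaches M.init u [] q then (h.choose.map f).prod else 1) fun g => ?_
  obtain ⟨r, hr, hrun⟩ := (hM (word g ++ word g⁻¹, [])).mp (by simp [hword])
  obtain ⟨q, hg, hrest⟩ := hrun.exists_split_of_right_nil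
  have hq : ∃ u, M.Reaches M.init u [] q := ⟨word g, hg⟩
  refine ⟨q, ?_⟩
  simp only [dif_pos hq]
  rw [← hword g]
  exact AsyncFSA.prod_eq_of_reaches (fun u v => (hM (u, v)).symm) hr hrest hq.choose_spec hg

end

theorem Submonoid.exists_list_map_val_prod_eq {M : Type*} [Monoid M] {A : Set M}
    (hA : Submonoid.closure A = ⊤) (x : M) : ∃ l : List A, (l.map (↑)).prod = x := by
  obtain ⟨w, hw⟩ : x ∈ MonoidHom.mrange (FreeMonoid.lift ((↑) : A → M)) := by
    rw [← Submonoid.closure_eq_mrange, hA]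
    trivial
  exact ⟨w.toList, by rwa [FreeMonoid.lift_apply] at hw⟩

theorem stmt_10_general {G : Type*} [Group G] (A : Set G)
    (hgen : Submonoid.closure A = ⊤) :
    IsRationalRel (MWP A) ↔ Finite G :=
  ⟨finite_of_isRationalRel_prod_eq (Submonoid.exists_list_map_val_prod_eq hgen),
    fun _ => isRationalRel_prod_eq_of_finite _⟩

/-- A group finitely generated as a monoid has rational monoid word problem
iff it is finite. -/
theorem stmt_10 {G : Type*} [Group G] (A : Set G) (hA : A.Finite)
    (hgen : Submonoid.closure A = ⊤) :
    IsRationalRel (MWP A) ↔ Finite G :=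
  stmt_10_general A hgen
end

section
/- Let M be a monoid finitely generated as a monoid by A, and let S be the subsemigroup of M generated by A. Then SWP(S,A) is rational if and only if MWP(M,A) is rational. -/
/-! Both directions are closure properties of rational relations. Since every nonempty word
evaluates in `S`, `SWP(S,A) = MWP(M,A) ∩ (A⁺ × A⁺)`, and intersecting with a product of regular
languages preserves rationality (run a DFA on each tape alongside the two-tape automaton).
Conversely, `MWP(M,A)` only adds to `SWP(S,A)` the pair `(ε, ε)` and the pairs `(u, ε)`, `(ε, u)`
with `u ∈ A⁺` and `ū = 1`. If some `w ∈ A⁺` has `w̄ = 1`, these `u` are exactly those with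
`(u, w) ∈ SWP(S,A)`, and the fibre of a rational relation over a fixed word is rational (hard-wire
`w` on the second tape); if there is no such `w`, they form the (empty) fibre over `ε`. -/

namespace AsyncFSA

variable {A B : Type*}

attribute [local instance] AsyncFSA.fin

theorem Reaches.step_none {M : AsyncFSA A B} {p q r : M.Q} {u : List A} {v : List B}
    (t : M.trans p none none q) (h : M.Reaches q u v r) : M.Reaches p u v r :=
  Reaches.step (a := none) (b := none) t h

theorem Reaches.map {M N : AsyncFSA A B} (f : M.Q → N.Q)
    (hf : ∀ {p a b q}, M.trans p a b q → N.trans (f p) a b (f q))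
    {p q : M.Q} {u : List A} {v : List B} (h : M.Reaches p u v q) :
    N.Reaches (f p) u v (f q) := by
  induction h with
  | refl => exact .refl _
  | step t _ ih => exact .step (hf t) ih

theorem Reaches.of_map {M N : AsyncFSA A B} (f : M.Q → N.Q)
    (hf : ∀ {p a b s}, N.trans (f p) a b s → ∃ q, s = f q ∧ M.trans p a b q)
    {p : M.Q} {s : N.Q} {u : List A} {v : List B} (h : N.Reaches (f p) u v s) :
    ∃ q, s = f q ∧ M.Reaches p u v q := by
  generalize hs : f p = s₀ at h
  induction h generalizing p with
  | refl => exact ⟨p, hs.symm, .refl _⟩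
  | step t _ ih =>
    subst hs
    obtain ⟨p', rfl, t'⟩ := hf t
    obtain ⟨r, rfl, h⟩ := ih rfl
    exact ⟨r, rfl, .step t' h⟩

def nil (A B : Type*) : AsyncFSA A B where
  Q := Unit
  init := ()
  accept := Set.univ
  trans _ _ _ _ := False

theorem accepts_nil (u : List A) (v : List B) :
    (nil A B).Accepts u v ↔ u = [] ∧ v = [] := by
  constructor
  · rintro ⟨_, _, h⟩
    cases h with
    | refl => exact ⟨rfl, rfl⟩
    | step t _ => exact t.elim
  · rintro ⟨rfl, rfl⟩
    exact ⟨(), trivial, .refl _⟩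

def union (M₁ M₂ : AsyncFSA A B) : AsyncFSA A B where
  Q := Option (M₁.Q ⊕ M₂.Q)
  init := none
  accept := {s | s.elim False (Sum.elim (· ∈ M₁.accept) (· ∈ M₂.accept))}
  trans s a b t := match s, a, b, t with
    | none, none, none, some s => s = .inl M₁.init ∨ s = .inr M₂.init
    | some (.inl p), a, b, some (.inl q) => M₁.trans p a b q
    | some (.inr p), a, b, some (.inr q) => M₂.trans p a b q
    | _, _, _, _ => False

theorem trans_union_none {M₁ M₂ : AsyncFSA A B} {a : Option A} {b : Option B}
    {s : (M₁.union M₂).Q} (t : (M₁.union M₂).trans none a b s) :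
    a = none ∧ b = none ∧ (s = some (.inl M₁.init) ∨ s = some (.inr M₂.init)) := by
  rcases a with _ | _ <;> rcases b with _ | _ <;> rcases s with _ | s | s <;> simp_all [union]

theorem reaches_union_inl_iff {M₁ M₂ : AsyncFSA A B} {p : M₁.Q} {s : (M₁.union M₂).Q}
    {u : List A} {v : List B} :
    (M₁.union M₂).Reaches (some (.inl p)) u v s ↔ ∃ q, s = some (.inl q) ∧ M₁.Reaches p u v q := by
  refine ⟨Reaches.of_map (N := M₁.union M₂) (fun q => some (.inl q)) fun {p a b s} t => ?_, ?_⟩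
  · rcases s with _ | _ | _ <;> simp_all [union]
  · rintro ⟨q, rfl, h⟩
    exact h.map (N := M₁.union M₂) (fun q => some (.inl q)) id

theorem reaches_union_inr_iff {M₁ M₂ : AsyncFSA A B} {p : M₂.Q} {s : (M₁.union M₂).Q}
    {u : List A} {v : List B} :
    (M₁.union M₂).Reaches (some (.inr p)) u v s ↔ ∃ q, s = some (.inr q) ∧ M₂.Reaches p u v q := by
  refine ⟨Reaches.of_map (N := M₁.union M₂) (fun q => some (.inr q)) fun {p a b s} t => ?_, ?_⟩
  · rcases s with _ | _ | _ <;> simp_all [union]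
  · rintro ⟨q, rfl, h⟩
    exact h.map (N := M₁.union M₂) (fun q => some (.inr q)) id

theorem accepts_union (M₁ M₂ : AsyncFSA A B) (u : List A) (v : List B) :
    (M₁.union M₂).Accepts u v ↔ M₁.Accepts u v ∨ M₂.Accepts u v := by
  constructor
  · rintro ⟨s, hs, h⟩
    cases h with
    | refl => exact hs.elim
    | step t h =>
      obtain ⟨rfl, rfl, rfl | rfl⟩ := trans_union_none t
      · obtain ⟨q, rfl, hq⟩ := reaches_union_inl_iff.1 h
        exact .inl ⟨q, hs, hq⟩
      · obtain ⟨q, rfl, hq⟩ := reaches_union_inr_iff.1 h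
        exact .inr ⟨q, hs, hq⟩
  · rintro (⟨q, hq, h⟩ | ⟨q, hq, h⟩)
    · exact ⟨some (.inl q), hq, .step_none (q := some (.inl M₁.init))
        (by exact Or.inl rfl) (reaches_union_inl_iff.2 ⟨q, rfl, h⟩)⟩
    · exact ⟨some (.inr q), hq, .step_none (q := some (.inr M₂.init))
        (by exact Or.inr rfl) (reaches_union_inr_iff.2 ⟨q, rfl, h⟩)⟩

def swap (M : AsyncFSA A B) : AsyncFSA B A where
  Q := M.Q
  init := M.init
  accept := M.accept
  trans p b a q := M.trans p a b q

theorem Reaches.swap {M : AsyncFSA A B} {p q : M.Q} {u : List A} {v : List B}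
    (h : M.Reaches p u v q) : M.swap.Reaches p v u q := by
  induction h with
  | refl => exact .refl _
  | step t _ ih => exact .step (M := M.swap) t ih

theorem accepts_swap (M : AsyncFSA A B) (u : List A) (v : List B) :
    M.swap.Accepts v u ↔ M.Accepts u v :=
  ⟨fun ⟨q, hq, h⟩ => ⟨q, hq, h.swap⟩, fun ⟨q, hq, h⟩ => ⟨q, hq, h.swap⟩⟩

section interDFA

variable {σ τ : Type} [Finite σ] [Finite τ]

def interDFA (M : AsyncFSA A B) (D : DFA A σ) (E : DFA B τ) : AsyncFSA A B where
  Q := M.Q × σ × τ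
  init := (M.init, D.start, E.start)
  accept := {s | s.1 ∈ M.accept ∧ s.2.1 ∈ D.accept ∧ s.2.2 ∈ E.accept}
  trans s a b t := M.trans s.1 a b t.1 ∧ t.2.1 = D.evalFrom s.2.1 a.toList ∧
    t.2.2 = E.evalFrom s.2.2 b.toList

theorem Reaches.interDFA {M : AsyncFSA A B} {D : DFA A σ} {E : DFA B τ} {p q : M.Q}
    {u : List A} {v : List B} (h : M.Reaches p u v q) (x : σ) (y : τ) :
    (M.interDFA D E).Reaches (p, x, y) u v (q, D.evalFrom x u, E.evalFrom y v) := by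
  induction h generalizing x y with
  | refl => exact .refl _
  | step t _ ih =>
    simp only [DFA.evalFrom_of_append]
    exact .step ⟨t, rfl, rfl⟩ (ih _ _)

theorem reaches_interDFA_iff {M : AsyncFSA A B} {D : DFA A σ} {E : DFA B τ}
    {s t : (M.interDFA D E).Q} {u : List A} {v : List B} :
    (M.interDFA D E).Reaches s u v t ↔
      M.Reaches s.1 u v t.1 ∧ t.2.1 = D.evalFrom s.2.1 u ∧ t.2.2 = E.evalFrom s.2.2 v := by
  constructor
  · intro h
    induction h with
    | refl => exact ⟨.refl _, rfl, rfl⟩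
    | step t _ ih =>
      obtain ⟨t, hx, hy⟩ := t
      obtain ⟨h, hx', hy'⟩ := ih
      refine ⟨.step t h, ?_, ?_⟩
      · rw [hx', hx, DFA.evalFrom_of_append]
      · rw [hy', hy, DFA.evalFrom_of_append]
  · obtain ⟨p, x, y⟩ := s
    obtain ⟨q, x', y'⟩ := t
    rintro ⟨h, rfl, rfl⟩
    exact h.interDFA x y

theorem accepts_interDFA (M : AsyncFSA A B) (D : DFA A σ) (E : DFA B τ) (u : List A)
    (v : List B) :
    (M.interDFA D E).Accepts u v ↔ M.Accepts u v ∧ u ∈ D.accepts ∧ v ∈ E.accepts := by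
  constructor
  · rintro ⟨⟨q, x, y⟩, ⟨hq, hx, hy⟩, h⟩
    obtain ⟨h, rfl, rfl⟩ := reaches_interDFA_iff.1 h
    exact ⟨⟨q, hq, h⟩, hx, hy⟩
  · rintro ⟨⟨q, hq, h⟩, hu, hv⟩
    exact ⟨(q, D.eval u, E.eval v), ⟨hq, hu, hv⟩, reaches_interDFA_iff.2 ⟨h, rfl, rfl⟩⟩

end interDFA

/-- The second component is the length of the prefix of `w` consumed so far. -/
def fixRight (M : AsyncFSA A B) (w : List B) : AsyncFSA A B where
  Q := M.Q × Fin (w.length + 1)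
  init := (M.init, 0)
  accept := {s | s.1 ∈ M.accept ∧ s.2 = Fin.last _}
  trans s a b t := b = none ∧ ∃ c, M.trans s.1 a c t.1 ∧ w.drop s.2 = c.toList ++ w.drop t.2

theorem Reaches.of_fixRight {M : AsyncFSA A B} {w : List B} {s t : (M.fixRight w).Q}
    {u : List A} {v : List B} (h : (M.fixRight w).Reaches s u v t) :
    v = [] ∧ ∃ z, w.drop s.2 = z ++ w.drop t.2 ∧ M.Reaches s.1 u z t.1 := by
  induction h with
  | refl => exact ⟨rfl, [], rfl, .refl _⟩
  | step t _ ih =>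
    obtain ⟨rfl, c, t, hc⟩ := t
    obtain ⟨rfl, z, hz, h⟩ := ih
    exact ⟨rfl, c.toList ++ z, by rw [hc, hz, List.append_assoc], .step t h⟩

theorem Reaches.fixRight {M : AsyncFSA A B} {w : List B} {p q : M.Q} {u : List A}
    {z : List B} (h : M.Reaches p u z q) {i j : Fin (w.length + 1)}
    (hij : w.drop i = z ++ w.drop j) : (M.fixRight w).Reaches (p, i) u [] (q, j) := by
  induction h generalizing i with
  | refl =>
    have := congrArg List.length hij
    simp only [List.nil_append, List.length_drop] at this
    obtain rfl : i = j := Fin.ext (by omega)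
    exact .refl _
  | @step _ _ _ _ c _ z t _ ih =>
    have hlen := congrArg List.length hij
    simp only [List.length_drop, List.length_append] at hlen
    have hk : i + c.toList.length < w.length + 1 := by omega
    have hdrop : w.drop (i + c.toList.length) = z ++ w.drop j := by
      rw [← List.drop_drop, hij, List.append_assoc, List.drop_left]
    refine .step (q := (_, ⟨_, hk⟩)) (b := none) ⟨rfl, c, t, ?_⟩ (ih hdrop)
    rw [hij, List.append_assoc, ← hdrop]

theorem accepts_fixRight (M : AsyncFSA A B) (w : List B) (u : List A) (v : List B) :
    (M.fixRight w).Accepts u v ↔ v = [] ∧ M.Accepts u w := by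
  constructor
  · rintro ⟨⟨q, _⟩, ⟨hq, rfl⟩, h⟩
    obtain ⟨rfl, z, hz, h⟩ := h.of_fixRight
    simp only [fixRight, Fin.val_zero, List.drop_zero, Fin.val_last, List.drop_length,
      List.append_nil] at hz h
    exact ⟨rfl, q, hq, hz ▸ h⟩
  · rintro ⟨rfl, q, hq, h⟩
    exact ⟨(q, Fin.last _), ⟨hq, rfl⟩, h.fixRight (by simp)⟩

end AsyncFSA

namespace IsRationalRel

variable {A B : Type*} {R S : Set (List A × List B)}

theorem union (hR : IsRationalRel R) (hS : IsRationalRel S) : IsRationalRel (R ∪ S) := by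
  obtain ⟨M₁, h₁⟩ := hR
  obtain ⟨M₂, h₂⟩ := hS
  exact ⟨M₁.union M₂, fun p => by rw [Set.mem_union, h₁, h₂, AsyncFSA.accepts_union]⟩

theorem swap (hR : IsRationalRel R) : IsRationalRel (Prod.swap ⁻¹' R) := by
  obtain ⟨M, h⟩ := hR
  exact ⟨M.swap, fun p => by rw [Set.mem_preimage, h, ← AsyncFSA.accepts_swap]; rfl⟩

theorem inter_regular (hR : IsRationalRel R) {K : Language A} {L : Language B}
    (hK : K.IsRegular) (hL : L.IsRegular) : IsRationalRel (R ∩ {p | p.1 ∈ K ∧ p.2 ∈ L}) := by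
  obtain ⟨M, h⟩ := hR
  obtain ⟨σ, _, D, rfl⟩ := hK
  obtain ⟨τ, _, E, rfl⟩ := hL
  exact ⟨M.interDFA D E, fun p => by
    rw [Set.mem_inter_iff, h, Set.mem_ofPred_eq, AsyncFSA.accepts_interDFA]⟩

theorem fixRight (hR : IsRationalRel R) (w : List B) :
    IsRationalRel {p : List A × List B | p.2 = [] ∧ (p.1, w) ∈ R} := by
  obtain ⟨M, h⟩ := hR
  exact ⟨M.fixRight w, fun p => by rw [Set.mem_ofPred_eq, h, AsyncFSA.accepts_fixRight]⟩

end IsRationalRel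

theorem isRationalRel_singleton_nil {A B : Type*} :
    IsRationalRel {(([] : List A), ([] : List B))} :=
  ⟨AsyncFSA.nil A B, fun p => by rw [AsyncFSA.accepts_nil, Set.mem_singleton_iff, Prod.ext_iff]⟩

def nonemptyDFA (α : Type*) : DFA α Bool where
  step _ _ := true
  start := false
  accept := {true}

theorem mem_accepts_nonemptyDFA {α : Type*} {w : List α} :
    w ∈ (nonemptyDFA α).accepts ↔ w ≠ [] := by
  have : ∀ b (w : List α), (nonemptyDFA α).evalFrom b w = (b || !w.isEmpty) := by
    intro b w
    induction w generalizing b with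
    | nil => simp
    | cons a w ih => rw [DFA.evalFrom_cons, ih]; simp [nonemptyDFA]
  rw [DFA.mem_accepts, DFA.eval, this]
  simp [nonemptyDFA]

theorem isRegular_ne_nil (α : Type*) : Language.IsRegular ({w | w ≠ []} : Set (List α)) :=
  ⟨Bool, inferInstance, nonemptyDFA α, Set.ext fun _ => mem_accepts_nonemptyDFA⟩

theorem evalWord_eq_some_prod {α M : Type*} [Monoid M] (f : α → M) {u : List α} (hu : u ≠ []) :
    evalWord f u = some (u.map f).prod := by
  obtain ⟨a, l, rfl⟩ := List.exists_cons_of_ne_nil hu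
  simp [evalWord, List.foldl_map, List.prod_eq_foldl]

section WordProblem

variable {M : Type*} [Monoid M] (A : Set M)

theorem mem_SWP_iff {u v : List A} :
    (u, v) ∈ SWP A ↔ u ≠ [] ∧ v ≠ [] ∧ (u.map Subtype.val).prod = (v.map Subtype.val).prod := by
  refine ⟨fun ⟨hu, hv, h⟩ => ⟨hu, hv, ?_⟩, fun ⟨hu, hv, h⟩ => ⟨hu, hv, ?_⟩⟩
  · rwa [evalWord_eq_some_prod _ hu, evalWord_eq_some_prod _ hv, Option.some_inj] at h
  · rw [evalWord_eq_some_prod _ hu, evalWord_eq_some_prod _ hv, h]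

theorem SWP_eq_MWP_inter : SWP A = MWP A ∩ {p | p.1 ≠ [] ∧ p.2 ≠ []} := by
  ext ⟨u, v⟩
  simp only [mem_SWP_iff, MWP, Set.mem_inter_iff, Set.mem_ofPred_eq]
  tauto

theorem exists_mem_SWP_iff_prod_eq_one :
    ∃ w : List A, ∀ u, (u, w) ∈ SWP A ↔ u ≠ [] ∧ (u.map Subtype.val).prod = 1 := by
  by_cases h : ∃ w : List A, w ≠ [] ∧ (w.map Subtype.val).prod = 1
  · obtain ⟨w, hw, hw1⟩ := h
    exact ⟨w, fun u => by rw [mem_SWP_iff, hw1]; tauto⟩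
  · exact ⟨[], fun u => iff_of_false (fun hu => ((mem_SWP_iff A).1 hu).2.1 rfl)
      fun ⟨hu, h1⟩ => h ⟨u, hu, h1⟩⟩

theorem MWP_eq_union {w : List A}
    (hw : ∀ u, (u, w) ∈ SWP A ↔ u ≠ [] ∧ (u.map Subtype.val).prod = 1) :
    MWP A = SWP A ∪ {p | p.2 = [] ∧ (p.1, w) ∈ SWP A} ∪
      Prod.swap ⁻¹' {p | p.2 = [] ∧ (p.1, w) ∈ SWP A} ∪ {([], [])} := by
  ext ⟨u, v⟩
  simp only [MWP, mem_SWP_iff, hw, Set.mem_union, Set.mem_ofPred_eq, Set.mem_preimage,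
    Prod.swap_prod_mk, Set.mem_singleton_iff, Prod.mk.injEq]
  rcases eq_or_ne u [] with rfl | hu <;> rcases eq_or_ne v [] with rfl | hv <;>
    simp [*, eq_comm]

end WordProblem

theorem stmt_11_general {M : Type*} [Monoid M] (A : Set M) :
    IsRationalRel (SWP A) ↔ IsRationalRel (MWP A) := by
  refine ⟨fun h => ?_, fun h => ?_⟩
  · obtain ⟨w, hw⟩ := exists_mem_SWP_iff_prod_eq_one A
    rw [MWP_eq_union A hw]
    exact ((h.union (h.fixRight w)).union (h.fixRight w).swap).union isRationalRel_singleton_nil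
  · rw [SWP_eq_MWP_inter]
    exact h.inter_regular (isRegular_ne_nil A) (isRegular_ne_nil A)

/-- For a monoid generated by `A` as a monoid, the semigroup word problem of
the subsemigroup generated by `A` is rational iff the monoid word problem is
rational. -/
theorem stmt_11 {M : Type*} [Monoid M] (A : Set M) (hA : A.Finite)
    (hgen : Submonoid.closure A = ⊤) :
    IsRationalRel (SWP A) ↔ IsRationalRel (MWP A) :=
  stmt_11_general A
end
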